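/- In the Artin braid group B_4, the braid of the complete regeneration of a 2-point of type (B) (three cusps followed by a branch point) satisfies [σ_2³ · (σ_2^{−1} σ_1³ σ_2) · (σ_1² σ_2³ σ_1^{−2})] · [(σ_2 σ_1² σ_2)^{−1} σ_3 (σ_2 σ_1² σ_2)] = σ_2 σ_1² σ_2 σ_1 σ_3 σ_2 σ_1² σ_2. -/

import Mathlib

/-! The branch-point braid is the conjugate `Z⁻¹ σ₃ Z` by `Z = σ₂ σ₁² σ₂`, so the claim reduces
to the identity `σ₂³ (σ₂⁻¹ σ₁³ σ₂) (σ₁² σ₂³ σ₁⁻²) = Z σ₁ Z` in the subgroup generated by `σ₁, σ₂`.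
That identity follows from `σ₁ σ₂ σ₁ = σ₂ σ₁ σ₂` alone: the half twist `Δ = σ₁ σ₂ σ₁ = σ₂ σ₁ σ₂`
satisfies `Δ σ₁ = σ₂ Δ` and `Δ σ₂ = σ₁ Δ`, and extracting the factors `Δ` and moving them to the
right turns both `σ₂² σ₁³ σ₂ σ₁² σ₂³` and `Z σ₁ Z σ₁²` into `σ₂ σ₁ Δ³`. -/

/-- The braid relations among `m` Artin generators `σ_1, …, σ_m`, where the
generator `σ_{k+1}` is represented by the index `k : Fin m`:
`σ_i σ_{i+1} σ_i = σ_{i+1} σ_i σ_{i+1}` and `σ_i σ_j = σ_j σ_i` for `|i - j| ≥ 2`. -/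
def braidRels (m : ℕ) : Set (FreeGroup (Fin m)) :=
  { r | (∃ i j : Fin m, (i : ℕ) + 1 = (j : ℕ) ∧
          r = FreeGroup.of i * FreeGroup.of j * FreeGroup.of i *
              (FreeGroup.of j * FreeGroup.of i * FreeGroup.of j)⁻¹) ∨
        (∃ i j : Fin m, (i : ℕ) + 2 ≤ (j : ℕ) ∧
          r = FreeGroup.of i * FreeGroup.of j * (FreeGroup.of i)⁻¹ * (FreeGroup.of j)⁻¹) }

/-- The Artin braid group `B_n` on `n` strands, presented by the generators
`σ_1, …, σ_{n-1}` subject to the braid relations. -/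
def BraidGroup (n : ℕ) : Type := PresentedGroup (braidRels (n - 1))

instance (n : ℕ) : Group (BraidGroup n) :=
  inferInstanceAs (Group (PresentedGroup (braidRels (n - 1))))

/-- The Artin generator `σ_k` of the braid group `B_n`, defined for `1 ≤ k ≤ n - 1`
(with junk value `1` for indices out of range). -/
def σ (n : ℕ) (k : ℕ) : BraidGroup n :=
  if h : 1 ≤ k ∧ k ≤ n - 1 then
    (PresentedGroup.of (⟨k - 1, by omega⟩ : Fin (n - 1)) : PresentedGroup (braidRels (n - 1)))
  else 1

theorem σ_eq_of {n k : ℕ} (hk : 1 ≤ k ∧ k ≤ n - 1) :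
    σ n k = (PresentedGroup.of (⟨k - 1, by omega⟩ : Fin (n - 1)) :
      PresentedGroup (braidRels (n - 1))) :=
  dif_pos hk

theorem σ_mul_σ_succ_mul_σ {n i : ℕ} (hi : 1 ≤ i) (hin : i + 1 ≤ n - 1) :
    σ n i * σ n (i + 1) * σ n i = σ n (i + 1) * σ n i * σ n (i + 1) := by
  rw [σ_eq_of ⟨hi, by omega⟩, σ_eq_of ⟨by omega, hin⟩]
  exact PresentedGroup.mk_eq_mk_of_mul_inv_mem (Or.inl ⟨_, _, by simp; omega, rfl⟩)

section Monoid

variable {M : Type*} [Monoid M] {a b : M}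

theorem SemiconjBy.of_braid_left (h : a * b * a = b * a * b) : SemiconjBy (a * b * a) a b :=
  calc a * b * a * a = b * a * b * a := by rw [h]
    _ = b * (a * b * a) := by simp only [mul_assoc]

theorem SemiconjBy.of_braid_right (h : a * b * a = b * a * b) : SemiconjBy (a * b * a) b a :=
  calc a * b * a * b = a * (b * a * b) := by simp only [mul_assoc]
    _ = a * (a * b * a) := by rw [h]

theorem cusp_word_eq_of_braid (h : a * b * a = b * a * b) :
    b ^ 2 * a ^ 3 * b * a ^ 2 * b ^ 3 = b * a ^ 2 * b * a * (b * a ^ 2 * b) * a ^ 2 := by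
  have hΔa := (SemiconjBy.of_braid_left h).eq
  have hΔb := (SemiconjBy.of_braid_right h).eq
  have hΔ (w : M) : a * (b * (a * w)) = a * b * a * w := by simp only [mul_assoc]
  have hΔ' (w : M) : b * (a * (b * w)) = a * b * a * w := by rw [h]; simp only [mul_assoc]
  generalize a * b * a = Δ at hΔ hΔ' hΔa hΔb
  have tail {x y z : M} (hxy : x * y = z) (w : M) : x * (y * w) = z * w := by
    rw [← mul_assoc, hxy]
  have hL : b ^ 2 * a ^ 3 * b * a ^ 2 * b ^ 3 = b * (a * Δ ^ 3) := by
    simp only [pow_succ, pow_zero, one_mul, mul_assoc, hΔ, hΔ', hΔa, hΔb, tail hΔa, tail hΔb]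
  have hR : b * a ^ 2 * b * a * (b * a ^ 2 * b) * a ^ 2 = b * (a * Δ ^ 3) := by
    simp only [pow_succ, pow_zero, one_mul, mul_assoc, hΔ, hΔ', hΔa, hΔb, tail hΔa, tail hΔb]
  rw [hL, hR]

end Monoid

theorem cusp_braids_mul_eq_of_braid {G : Type*} [Group G] {a b : G} (h : a * b * a = b * a * b) :
    b ^ 3 * (b⁻¹ * a ^ 3 * b) * (a ^ 2 * b ^ 3 * (a ^ 2)⁻¹) =
      b * a ^ 2 * b * a * (b * a ^ 2 * b) :=
  calc _ = b ^ 2 * a ^ 3 * b * a ^ 2 * b ^ 3 * (a ^ 2)⁻¹ := by group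
    _ = _ := by rw [cusp_word_eq_of_braid h]; group

/-- In `B_4`, the braid of the complete regeneration of a 2-point of type (B):
`[σ₂³ (σ₂⁻¹ σ₁³ σ₂)(σ₁² σ₂³ σ₁⁻²)] [(σ₂ σ₁² σ₂)⁻¹ σ₃ (σ₂ σ₁² σ₂)]
  = σ₂ σ₁² σ₂ σ₁ σ₃ σ₂ σ₁² σ₂`. -/
theorem two_point_type_B_braid :
    (σ 4 2 ^ 3 * ((σ 4 2)⁻¹ * σ 4 1 ^ 3 * σ 4 2) * (σ 4 1 ^ 2 * σ 4 2 ^ 3 * (σ 4 1 ^ 2)⁻¹)) *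
        ((σ 4 2 * σ 4 1 ^ 2 * σ 4 2)⁻¹ * σ 4 3 * (σ 4 2 * σ 4 1 ^ 2 * σ 4 2)) =
      σ 4 2 * σ 4 1 ^ 2 * σ 4 2 * σ 4 1 * σ 4 3 * σ 4 2 * σ 4 1 ^ 2 * σ 4 2 := by
  rw [cusp_braids_mul_eq_of_braid (σ_mul_σ_succ_mul_σ (n := 4) le_rfl (by norm_num))]
  group
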